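/- arXiv:2409.03472 — 4 statements merged into one kernel-verified Lean document; each statement's English description precedes it below -/
import Mathlib

section
/- The eulerian magnitude differential squares to zero: for all k ≥ 2 and ℓ ≥ 0, the composition ∂_{k,ℓ} ∘ ∂_{k+1,ℓ} : EMC_{k+1,ℓ}(G) → EMC_{k-1,ℓ}(G) is the zero map. -/
variable {V : Type*} [Fintype V] [DecidableEq V]

/-- The length of a trail `(x_0, ..., x_k)`: the sum of consecutive path-metric distances. -/
noncomputable def trailLen (G : SimpleGraph V) {k : ℕ} (x : Fin (k + 1) → V) : ℕ :=
  ∑ i : Fin k, G.dist (x i.castSucc) (x i.succ)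

/-- `(x_0,...,x_k)` is an eulerian trail of length `ℓ`: pairwise distinct landmarks, finite
consecutive distances, total length `ℓ`. -/
def IsEulerian (G : SimpleGraph V) {k : ℕ} (ℓ : ℕ) (x : Fin (k + 1) → V) : Prop :=
  Function.Injective x ∧ (∀ i : Fin k, G.Reachable (x i.castSucc) (x i.succ)) ∧
    trailLen G x = ℓ

/-- The eulerian magnitude chain group `EMC_{k,ℓ}(G)`. -/
abbrev EMC (G : SimpleGraph V) (k ℓ : ℕ) : Type _ :=
  FreeAbelianGroup {x : Fin (k + 1) → V // IsEulerian G ℓ x}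

open Classical in
/-- The eulerian magnitude differential `∂_{k+1,ℓ} : EMC_{k+1,ℓ}(G) → EMC_{k,ℓ}(G)`,
the alternating sum over interior indices `0 < i < k+1` of the maps omitting the `i`-th
landmark when the resulting tuple still has length `ℓ` (and `0` otherwise). -/
noncomputable def bdry (G : SimpleGraph V) (k ℓ : ℕ) : EMC G (k + 1) ℓ →+ EMC G k ℓ :=
  FreeAbelianGroup.lift fun x : {x : Fin (k + 2) → V // IsEulerian G ℓ x} =>
    ∑ i : Fin (k + 2),
      if 0 < (i : ℕ) ∧ (i : ℕ) < k + 1 then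
        (if h : IsEulerian G ℓ (x.1 ∘ i.succAbove) then
          ((-1 : ℤ) ^ (i : ℕ)) •
            FreeAbelianGroup.of (⟨x.1 ∘ i.succAbove, h⟩ : {y : Fin (k + 1) → V // IsEulerian G ℓ y})
        else 0)
      else 0

/-! Write `∂` as the alternating sum of face maps `dᵢ`, where `dᵢ` deletes the `i`-th landmark when
`i` is interior and the length stays `ℓ`, and is zero otherwise. By the triangle inequality,
deleting a landmark never increases the length; hence `dⱼ ∘ dᵢ` sends a trail to the trail with two
landmarks deleted if that one still has length `ℓ`, and to `0` otherwise. The face maps therefore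
satisfy the simplicial identities `dᵢ ∘ dⱼ₊₁ = dⱼ ∘ dᵢ` (`i ≤ j`), and the usual sign cancellation
gives `∂ ∘ ∂ = 0`. -/

theorem Fin.succAbove_succ_comp_succAbove_of_le {n : ℕ} {i j : Fin (n + 2)} (h : i ≤ j) :
    j.succ.succAbove ∘ i.succAbove = i.castSucc.succAbove ∘ j.succAbove := by
  funext k
  rcases i with ⟨i, hi⟩
  rcases j with ⟨j, hj⟩
  rcases k with ⟨k, hk⟩
  simp only [Fin.le_def] at h
  simp only [Function.comp_apply, Fin.succAbove, Fin.lt_def]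
  split_ifs <;> simp_all [Fin.ext_iff] <;> omega

theorem AddMonoidHom.alternating_sum_comp_alternating_sum_eq_zero {A B C : Type*}
    [AddCommGroup A] [AddCommGroup B] [AddCommGroup C] {n : ℕ}
    (d : Fin (n + 3) → A →+ B) (d' : Fin (n + 2) → B →+ C)
    (h : ∀ i j : Fin (n + 2), i ≤ j → (d' i).comp (d j.succ) = (d' j).comp (d i.castSucc)) :
    (∑ i : Fin (n + 2), (-1 : ℤ) ^ (i : ℕ) • d' i).comp
      (∑ j : Fin (n + 3), (-1 : ℤ) ^ (j : ℕ) • d j) = 0 := by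
  ext a
  simp only [AddMonoidHom.comp_apply, AddMonoidHom.finsetSum_apply, AddMonoidHom.smul_apply,
    map_sum, map_zsmul, Finset.smul_sum, smul_smul, AddMonoidHom.zero_apply]
  rw [← Finset.sum_product']
  -- `σ` pairs `d' i ∘ d j` with the other side of its simplicial identity, of opposite sign.
  let σ (p : Fin (n + 3) × Fin (n + 2)) : Fin (n + 3) × Fin (n + 2) :=
    if h : (p.1 : ℕ) ≤ p.2 then (p.2.succ, ⟨p.1, by omega⟩)
    else (p.2.castSucc, ⟨p.1 - 1, by omega⟩)
  refine Finset.sum_involution (fun p _ => σ p) ?_ ?_ (fun _ _ => Finset.mem_univ _) ?_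
  · rintro ⟨j, i⟩ -
    by_cases hji : (j : ℕ) ≤ i
    · have hswap := DFunLike.congr_fun (h ⟨j, by omega⟩ i (Fin.le_def.2 hji)) a
      have hj : (Fin.castSucc ⟨j, by omega⟩ : Fin (n + 3)) = j := Fin.ext rfl
      simp only [σ, dif_pos hji, AddMonoidHom.comp_apply, hj] at hswap ⊢
      rw [hswap, ← add_smul, Fin.val_succ, pow_succ]
      convert zero_smul ℤ _
      ring
    · obtain ⟨m, hm⟩ : ∃ m, (j : ℕ) = m + 1 := ⟨j - 1, by omega⟩
      have hswap := DFunLike.congr_fun (h i ⟨j - 1, by omega⟩ (Fin.le_def.2 (by simp; omega))) a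
      have hj : (Fin.succ ⟨j - 1, by omega⟩ : Fin (n + 3)) = j := Fin.ext (by simp; omega)
      simp only [σ, dif_neg hji, AddMonoidHom.comp_apply, hj] at hswap ⊢
      rw [← hswap, ← add_smul, Fin.val_castSucc, hm, Nat.add_sub_cancel, pow_succ]
      convert zero_smul ℤ _
      ring
  · rintro ⟨j, i⟩ - -
    simp only [σ]
    split_ifs <;> simp [Prod.ext_iff, Fin.ext_iff] <;> omega
  · rintro ⟨j, i⟩ -
    by_cases hji : (j : ℕ) ≤ i
    · simp only [σ, dif_pos hji]
      rw [dif_neg (by simp; omega)]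
      ext <;> simp
    · simp only [σ, dif_neg hji]
      rw [dif_pos (by simp; omega)]
      ext <;> simp
      omega

namespace SimpleGraph

variable {W : Type*} (G : SimpleGraph W)

theorem reachable_of_forall_reachable_succ {k : ℕ} {x : Fin (k + 1) → W}
    (hx : ∀ i : Fin k, G.Reachable (x i.castSucc) (x i.succ)) (a b : Fin (k + 1)) :
    G.Reachable (x a) (x b) := by
  have hzero (c : Fin (k + 1)) : G.Reachable (x 0) (x c) := by
    induction c using Fin.induction with
    | zero => rfl
    | succ c ih => exact ih.trans (hx c)
  exact (hzero a).symm.trans (hzero b)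

end SimpleGraph

section

variable {W : Type*} (G : SimpleGraph W)

theorem trailLen_eq_dist_add_trailLen_tail {n : ℕ} (x : Fin (n + 2) → W) :
    trailLen G x = G.dist (x 0) (x 1) + trailLen G (Fin.tail x) := by
  simp [trailLen, Fin.sum_univ_succ, Fin.tail]

theorem trailLen_comp_succAbove_le {n : ℕ} (x : Fin (n + 2) → W)
    (hx : ∀ a b, G.Reachable (x a) (x b)) (i : Fin (n + 2)) :
    trailLen G (x ∘ i.succAbove) ≤ trailLen G x := by
  induction n with
  | zero => simp [trailLen]
  | succ n ih =>
    rw [trailLen_eq_dist_add_trailLen_tail G x]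
    induction i using Fin.cases with
    | zero => exact Nat.le_add_left _ _
    | succ i =>
      have htail : Fin.tail (x ∘ i.succ.succAbove) = Fin.tail x ∘ i.succAbove := by
        funext t; simp [Fin.tail]
      rw [trailLen_eq_dist_add_trailLen_tail G, htail]
      induction i using Fin.cases with
      | zero =>
        have hskip : Fin.tail x ∘ (0 : Fin (n + 2)).succAbove = Fin.tail (Fin.tail x) := by
          funext t; simp [Fin.tail]
        rw [hskip, trailLen_eq_dist_add_trailLen_tail G (Fin.tail x)]
        have := (hx 0 1).dist_triangle_left (x 2)
        simp [Fin.tail] at this ⊢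
        omega
      | succ i =>
        have := ih (Fin.tail x) (fun a b => hx _ _) i.succ
        simp at this ⊢
        omega

variable {G} in
theorem IsEulerian.of_comp_succAbove_comp_succAbove {ℓ n : ℕ} {x : Fin (n + 3) → W}
    (hx : IsEulerian G ℓ x) {i : Fin (n + 3)} {j : Fin (n + 2)}
    (hij : IsEulerian G ℓ (x ∘ i.succAbove ∘ j.succAbove)) :
    IsEulerian G ℓ (x ∘ i.succAbove) := by
  obtain ⟨hinj, hreach, hlen⟩ := hx
  have hx : ∀ a b, G.Reachable (x a) (x b) := G.reachable_of_forall_reachable_succ hreach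
  have hle₁ := trailLen_comp_succAbove_le G x hx i
  have hle₂ := trailLen_comp_succAbove_le G (x ∘ i.succAbove) (fun a b => hx _ _) j
  refine ⟨hinj.comp Fin.succAbove_right_injective, fun t => hx _ _, ?_⟩
  have hlen' := hij.2.2
  simp only [Function.comp_assoc] at hle₂
  omega

open Classical in
noncomputable def emcOf {k : ℕ} (ℓ : ℕ) (y : Fin (k + 1) → W) : EMC G k ℓ :=
  if h : IsEulerian G ℓ y then FreeAbelianGroup.of ⟨y, h⟩ else 0

-- The endpoint faces are set to zero, so that `bdry` is a full alternating sum of faces and the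
-- simplicial identities hold for all indices.
noncomputable def face (k ℓ : ℕ) (i : Fin (k + 2)) : EMC G (k + 1) ℓ →+ EMC G k ℓ :=
  FreeAbelianGroup.lift fun x =>
    if 0 < (i : ℕ) ∧ (i : ℕ) < k + 1 then emcOf G ℓ (x.1 ∘ i.succAbove) else 0

theorem bdry_eq_sum_face (k ℓ : ℕ) :
    bdry G k ℓ = ∑ i : Fin (k + 2), (-1 : ℤ) ^ (i : ℕ) • face G k ℓ i := by
  ext x
  simp only [bdry, face, emcOf, FreeAbelianGroup.lift_apply_of, AddMonoidHom.finsetSum_apply,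
    AddMonoidHom.smul_apply]
  refine Finset.sum_congr rfl fun i _ => ?_
  split_ifs <;> simp

theorem face_of {k ℓ : ℕ} (i : Fin (k + 2)) (x : {x : Fin (k + 2) → W // IsEulerian G ℓ x}) :
    face G k ℓ i (FreeAbelianGroup.of x) =
      if 0 < (i : ℕ) ∧ (i : ℕ) < k + 1 then emcOf G ℓ (x.1 ∘ i.succAbove) else 0 :=
  FreeAbelianGroup.lift_apply_of _ _

theorem face_emcOf_comp_succAbove {k ℓ : ℕ} {x : Fin (k + 3) → W} (hx : IsEulerian G ℓ x)
    (i : Fin (k + 3)) (j : Fin (k + 2)) :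
    face G k ℓ j (emcOf G ℓ (x ∘ i.succAbove)) =
      if 0 < (j : ℕ) ∧ (j : ℕ) < k + 1 then emcOf G ℓ (x ∘ i.succAbove ∘ j.succAbove) else 0 := by
  by_cases hxi : IsEulerian G ℓ (x ∘ i.succAbove)
  · rw [emcOf, dif_pos hxi, face_of]
    rfl
  · have hxij : ¬ IsEulerian G ℓ (x ∘ i.succAbove ∘ j.succAbove) :=
      mt hx.of_comp_succAbove_comp_succAbove hxi
    simp [emcOf, hxi, hxij]

theorem face_face_of {k ℓ : ℕ} (x : {x : Fin (k + 3) → W // IsEulerian G ℓ x})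
    (i : Fin (k + 3)) (j : Fin (k + 2)) :
    face G k ℓ j (face G (k + 1) ℓ i (FreeAbelianGroup.of x)) =
      if (0 < (i : ℕ) ∧ (i : ℕ) < k + 2) ∧ (0 < (j : ℕ) ∧ (j : ℕ) < k + 1) then
        emcOf G ℓ (x.1 ∘ i.succAbove ∘ j.succAbove)
      else 0 := by
  rw [face_of]
  by_cases hi : 0 < (i : ℕ) ∧ (i : ℕ) < k + 2
  · rw [if_pos hi, face_emcOf_comp_succAbove G x.2]
    simp only [hi, true_and]
  · rw [if_neg hi, map_zero, if_neg (fun h => hi h.1)]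

theorem face_comp_face_of_le {k ℓ : ℕ} {i j : Fin (k + 2)} (h : i ≤ j) :
    (face G k ℓ i).comp (face G (k + 1) ℓ j.succ) =
      (face G k ℓ j).comp (face G (k + 1) ℓ i.castSucc) := by
  ext x
  simp only [AddMonoidHom.comp_apply, face_face_of, ← Function.comp_assoc,
    Fin.succAbove_succ_comp_succAbove_of_le h, Fin.val_succ, Fin.val_castSucc]
  rw [Fin.le_def] at h
  congr 1
  apply propext
  omega

end

theorem bdry_comp_bdry_general (G : SimpleGraph V) (k ℓ : ℕ) :
    (bdry G k ℓ).comp (bdry G (k + 1) ℓ) = 0 := by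
  rw [bdry_eq_sum_face, bdry_eq_sum_face]
  exact AddMonoidHom.alternating_sum_comp_alternating_sum_eq_zero _ _
    fun _ _ h => face_comp_face_of_le G h

/-- the eulerian magnitude differential squares to zero: for all `k ≥ 2`
and `ℓ ≥ 0`, `∂_{k,ℓ} ∘ ∂_{k+1,ℓ} = 0`.  (Here `bdry G k ℓ` is `∂_{k+1,ℓ}`, so the
composite below is `∂_{k+1,ℓ} ∘ ∂_{k+2,ℓ}` and the hypothesis `2 ≤ k + 1` encodes the
range of degrees.) -/
theorem bdry_comp_bdry (G : SimpleGraph V) (k ℓ : ℕ) (hk : 2 ≤ k + 1) :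
    (bdry G k ℓ).comp (bdry G (k + 1) ℓ) = 0 :=
  bdry_comp_bdry_general G k ℓ
end

section
/- Rearrangement lemma: if F_1,...,F_t is a shelling of a finite simplicial complex X, then the rearrangement obtained by listing first all facets of dimension d = dim X in the induced order, then all facets of dimension d−1 in the induced order, and so on in decreasing dimension, is also a shelling of X. -/
variable {V : Type*} [DecidableEq V]

/-- A finite (abstract) simplicial complex: a finite family of nonempty finite sets,
closed under nonempty subsets. -/
def IsComplex (X : Finset (Finset V)) : Prop :=
  (∀ s ∈ X, s.Nonempty) ∧ ∀ s ∈ X, ∀ t : Finset V, t.Nonempty → t ⊆ s → t ∈ X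

/-- A facet is a maximal face. -/
def IsFacet (X : Finset (Finset V)) (s : Finset V) : Prop :=
  s ∈ X ∧ ∀ t ∈ X, s ⊆ t → s = t

/-- `F : Fin t → Finset V` is a shelling of `X`: an enumeration of the facets such that
for each `k ≥ 1`, the intersection of `F k` with the union of the previous facets is a
non-empty union of codimension-one faces of `F k`. -/
def IsShelling (X : Finset (Finset V)) {t : ℕ} (F : Fin t → Finset V) : Prop :=
  Function.Injective F ∧ (∀ i, IsFacet X (F i)) ∧ (∀ s, IsFacet X s → ∃ i, F i = s) ∧
    ∀ k : Fin t, 0 < (k : ℕ) →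
      ∃ S : Finset (Finset V), S.Nonempty ∧
        (∀ s ∈ S, s ⊆ F k ∧ s.card + 1 = (F k).card) ∧
        ∀ σ : Finset V, σ.Nonempty →
          ((σ ⊆ F k ∧ ∃ i, i < k ∧ σ ⊆ F i) ↔ ∃ s ∈ S, σ ⊆ s)

/-- Rearrangement lemma: if `F_1,...,F_t` is a shelling of `X`, then the
rearrangement `F ∘ g` listing first all facets of maximal dimension in the induced order,
then those of the next dimension, and so on in decreasing dimension, is also a shelling.
The permutation `g` is characterized by: dimensions are non-increasing along `F ∘ g`,
and facets of equal dimension keep their induced (original) order. -/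
theorem shelling_rearrangement (X : Finset (Finset V)) (hX : IsComplex X)
    {t : ℕ} (F : Fin t → Finset V) (hF : IsShelling X F) (g : Equiv.Perm (Fin t))
    (hmono : ∀ i j : Fin t, i ≤ j → (F (g j)).card ≤ (F (g i)).card)
    (hstable : ∀ i j : Fin t, i < j → (F (g i)).card = (F (g j)).card → g i < g j) :
    IsShelling X (F ∘ g) := by
  obtain ⟨hinj, hfac, hsurj, hshell⟩ := hF
  -- Lemma A: if a codimension-one face of a facet `F m` is contained in a facet `F i`,
  -- then `F i` has cardinality at least that of `F m`.
  have lemA : ∀ (s : Finset V) (i m : Fin t), s ⊆ F i → s ⊆ F m →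
      s.card + 1 = (F m).card → (F m).card ≤ (F i).card := by
    intro s i m hsi hsm hcard
    by_contra h
    push_neg at h
    have hle : (F i).card ≤ s.card := by omega
    have hse : s = F i := Finset.eq_of_subset_of_card_le hsi hle
    have him : F i = F m := (hfac i).2 (F m) (hfac m).1 (hse ▸ hsm)
    have h1 : s.card = (F i).card := by rw [hse]
    have h2 : (F i).card = (F m).card := by rw [him]
    omega
  -- Key lemma: if a nonempty face σ lies in `F j` and in `F m`, where `F m` precedes
  -- `F j` in the new order, then σ lies in some `F i` with `i < j` (original order).
  have keyB : ∀ n : ℕ, ∀ m j : Fin t, (m : ℕ) < n → ∀ σ : Finset V, σ.Nonempty →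
      σ ⊆ F j → σ ⊆ F m → g.symm m < g.symm j → ∃ i, i < j ∧ σ ⊆ F i := by
    intro n
    induction n with
    | zero => intro m j hm; omega
    | succ n ih =>
      intro m j hm σ hσne hσj hσm hpos
      have hmj : m ≠ j := by
        intro h; rw [h] at hpos; exact lt_irrefl _ hpos
      by_cases hlt : m < j
      · exact ⟨m, hlt, hσm⟩
      · have hjm : j < m := by
          rcases lt_or_eq_of_le (not_lt.mp hlt) with h | h
          · exact h
          · exact absurd h.symm hmj
        have hcard : (F j).card ≤ (F m).card := by
          have := hmono (g.symm m) (g.symm j) (le_of_lt hpos)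
          simpa using this
        have hne : (F m).card ≠ (F j).card := by
          intro h
          have := hstable (g.symm m) (g.symm j) hpos (by simpa using h)
          simp only [Equiv.apply_symm_apply] at this
          exact absurd this (not_lt.mpr (le_of_lt hjm))
        have hmpos : 0 < (m : ℕ) := by
          have : (j : ℕ) < (m : ℕ) := hjm
          omega
        obtain ⟨S, hSne, hScodim, hSiff⟩ := hshell m hmpos
        obtain ⟨s, hsS, hσs⟩ := (hSiff σ hσne).mp ⟨hσm, j, hjm, hσj⟩
        have hsne : s.Nonempty := hσne.mono hσs
        obtain ⟨-, i'', hi''m, hsi''⟩ := (hSiff s hsne).mpr ⟨s, hsS, subset_rfl⟩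
        have hA : (F m).card ≤ (F i'').card :=
          lemA s i'' m hsi'' (hScodim s hsS).1 (hScodim s hsS).2
        have hposn : g.symm i'' < g.symm j := by
          by_contra h
          push_neg at h
          have := hmono (g.symm j) (g.symm i'') h
          simp only [Equiv.apply_symm_apply] at this
          omega
        have hi''n : (i'' : ℕ) < n := by
          have h1 : (i'' : ℕ) < (m : ℕ) := hi''m
          omega
        exact ih i'' j hi''n σ hσne hσj (hσs.trans hsi'') hposn
  refine ⟨hinj.comp g.injective, fun i => hfac (g i), ?_, ?_⟩
  · intro s hs
    obtain ⟨i, hi⟩ := hsurj s hs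
    exact ⟨g.symm i, by simpa using hi⟩
  · intro k hk
    simp only [Function.comp_apply]
    by_cases hj : 0 < ((g k : Fin t) : ℕ)
    · -- `F (g k)` was not the first facet originally: reuse its original restriction set.
      obtain ⟨S, hSne, hScodim, hSiff⟩ := hshell (g k) hj
      refine ⟨S, hSne, hScodim, ?_⟩
      intro σ hσne
      constructor
      · rintro ⟨hσk, i', hi'k, hσi'⟩
        have hpos : g.symm (g i') < g.symm (g k) := by
          simpa using hi'k
        obtain ⟨i, hij, hσi⟩ := keyB t (g i') (g k) (g i').isLt σ hσne hσk hσi' hpos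
        exact (hSiff σ hσne).mp ⟨hσk, i, hij, hσi⟩
      · rintro ⟨s, hsS, hσs⟩
        obtain ⟨hσk, -⟩ := (hSiff σ hσne).mpr ⟨s, hsS, hσs⟩
        have hsne : s.Nonempty := hσne.mono hσs
        obtain ⟨-, i, hij, hsi⟩ := (hSiff s hsne).mpr ⟨s, hsS, subset_rfl⟩
        have hA : (F (g k)).card ≤ (F i).card :=
          lemA s i (g k) hsi (hScodim s hsS).1 (hScodim s hsS).2
        have hik : g.symm i < k := by
          by_contra h
          push_neg at h
          have hne : g.symm i ≠ k := by
            intro he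
            have : i = g k := by rw [← he]; simp
            rw [this] at hij
            exact lt_irrefl _ hij
          have hklt : k < g.symm i := lt_of_le_of_ne h (Ne.symm hne)
          have hle := hmono k (g.symm i) (le_of_lt hklt)
          simp only [Equiv.apply_symm_apply] at hle
          have heq : (F (g k)).card = (F i).card := le_antisymm hA hle
          have := hstable k (g.symm i) hklt (by simpa using heq)
          simp only [Equiv.apply_symm_apply] at this
          exact absurd this (not_lt.mpr (le_of_lt hij))
        exact ⟨hσk, g.symm i, hik, by simpa using hσs.trans hsi⟩
    · -- `F (g k)` was the first facet originally; show it is a single vertex and use `S = {∅}`.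
      push_neg at hj
      have hjz : ((g k : Fin t) : ℕ) = 0 := le_antisymm hj (Nat.zero_le _)
      have htpos : 0 < t := k.pos
      set z : Fin t := ⟨0, htpos⟩ with hz
      set m : Fin t := g z with hmdef
      have hzk : z < k := by
        simp only [Fin.lt_def]
        simpa [hz] using hk
      have hmk : m ≠ g k := fun h => absurd (g.injective h) (ne_of_lt hzk)
      have hmpos : 0 < (m : ℕ) := by
        rcases Nat.eq_zero_or_pos (m : ℕ) with h | h
        · exact absurd (Fin.ext (by omega) : m = g k) hmk
        · exact h
      have hcard : (F (g k)).card ≤ (F m).card := by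
        have := hmono z k (le_of_lt hzk)
        simpa using this
      -- show `(F m).card = 1`
      have hm1 : (F m).card = 1 := by
        by_contra hne1
        have hm2 : 2 ≤ (F m).card := by
          have : (F m).Nonempty := hX.1 (F m) (hfac m).1
          have := Finset.card_pos.mpr this
          omega
        obtain ⟨S, hSne, hScodim, hSiff⟩ := hshell m hmpos
        obtain ⟨s, hsS⟩ := hSne
        have hsne : s.Nonempty := by
          rw [← Finset.card_pos]
          have := (hScodim s hsS).2
          omega
        obtain ⟨-, i, him, hsi⟩ := (hSiff s hsne).mpr ⟨s, hsS, subset_rfl⟩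
        have hA : (F m).card ≤ (F i).card :=
          lemA s i m hsi (hScodim s hsS).1 (hScodim s hsS).2
        have hiz : z < g.symm i := by
          have hne : g.symm i ≠ z := by
            intro he
            have : i = m := by rw [hmdef, ← he]; simp
            rw [this] at him
            exact lt_irrefl _ him
          rcases lt_or_ge z (g.symm i) with h | h
          · exact h
          · exact absurd (le_antisymm h (by simp [hz, Fin.le_def])) hne
        have hle := hmono z (g.symm i) (le_of_lt hiz)
        simp only [Equiv.apply_symm_apply, ← hmdef] at hle
        have heq : (F m).card = (F i).card := le_antisymm hA hle
        have := hstable z (g.symm i) hiz (by simpa [← hmdef] using heq)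
        simp only [Equiv.apply_symm_apply, ← hmdef] at this
        exact absurd this (not_lt.mpr (le_of_lt him))
      have hk1 : (F (g k)).card = 1 := by
        have : 0 < (F (g k)).card :=
          Finset.card_pos.mpr (hX.1 (F (g k)) (hfac (g k)).1)
        omega
      refine ⟨{∅}, ⟨∅, Finset.mem_singleton_self ∅⟩, ?_, ?_⟩
      · intro s hs
        rw [Finset.mem_singleton] at hs
        subst hs
        exact ⟨Finset.empty_subset _, by simp [hk1]⟩
      · intro σ hσne
        constructor
        · rintro ⟨hσk, i', hi'k, hσi'⟩
          exfalso
          -- σ nonempty ⊆ F (g k) of card 1 implies σ = F (g k)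
          have hσeq : σ = F (g k) := by
            apply Finset.eq_of_subset_of_card_le hσk
            have := Finset.card_pos.mpr hσne
            omega
          have hfe : F (g k) = F (g i') := by
            apply (hfac (g k)).2 (F (g i')) (hfac (g i')).1
            rw [← hσeq]; exact hσi'
          have : g k = g i' := hinj hfe
          have : k = i' := g.injective this
          rw [this] at hi'k
          exact lt_irrefl _ hi'k
        · rintro ⟨s, hsS, hσs⟩
          rw [Finset.mem_singleton] at hsS
          subst hsS
          exact absurd (Finset.subset_empty.mp hσs) hσne.ne_empty
end

section
/- If X is a shellable finite simplicial complex and 0 ≤ r ≤ s ≤ dim X, then the complex X^{(r,s)} = { σ ∈ X : dim σ ≤ s and σ ⊆ F for some facet F with dim F ≥ r } is shellable. -/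
/-
A shelling is recorded as a rank function on the facets together with restriction faces: a
face `σ` of a facet `F` lies in an earlier facet iff it misses some vertex of the restriction
face `R(F)`. Keeping only the facets of dimension `≥ r` keeps every `R(F)`: if `σ ⊆ F` misses
`x ∈ R(F)`, then `F \ {x}` lies in an earlier facet, and that facet has dimension at least
`dim F`, since otherwise it would equal `F \ {x} ⊂ F`. For the `s`-skeleton, rank a face first by
the earliest facet of the complex containing it and then colexicographically. The skeleton
facets first reached in a facet `F` are `F` itself or the `s`-faces of `F` containing `R(F)`, and
the restriction face of such a face `B` is `R(F)` together with the vertices of `B` that can be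
exchanged for a smaller vertex of `F \ B`.
-/

open scoped Classical

variable {V : Type*} [DecidableEq V]

/-- `X` is shellable if it admits a shelling. -/
def Shellable (X : Finset (Finset V)) : Prop :=
  ∃ (t : ℕ) (F : Fin t → Finset V), IsShelling X F

open Finset

variable {α : Type*} [LinearOrder α]

def IsRestrictionFace (Y : Finset (Finset V)) (rk : Finset V → α) (F R : Finset V) : Prop :=
  R ⊆ F ∧ ((∃ G, IsFacet Y G ∧ rk G < rk F) → R.Nonempty) ∧
    ∀ σ : Finset V, σ.Nonempty → σ ⊆ F →
      ((∃ G, IsFacet Y G ∧ rk G < rk F ∧ σ ⊆ G) ↔ ¬R ⊆ σ)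

def IsShellingOrder (Y : Finset (Finset V)) (rk : Finset V → α) : Prop :=
  Set.InjOn rk {F | IsFacet Y F} ∧ ∀ F, IsFacet Y F → ∃ R, IsRestrictionFace Y rk F R

theorem exists_erase_eq_of_subset_of_card_add_one {s B : Finset V} (hsB : s ⊆ B)
    (hcard : s.card + 1 = B.card) : ∃ x ∈ B, B.erase x = s := by
  obtain ⟨x, hxB, hsx⟩ :=
    ssubset_iff_exists_subset_erase.1 (ssubset_of_subset_of_ne hsB (by rintro rfl; omega))
  refine ⟨x, hxB, (eq_of_subset_of_card_le hsx ?_).symm⟩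
  rw [card_erase_of_mem hxB]
  omega

theorem exists_mem_subset_iff_not_subset_filter {S : Finset (Finset V)} {B σ : Finset V}
    (hS : ∀ s ∈ S, s ⊆ B ∧ s.card + 1 = B.card) (hσB : σ ⊆ B) :
    (∃ s ∈ S, σ ⊆ s) ↔ ¬B.filter (fun x => B.erase x ∈ S) ⊆ σ := by
  constructor
  · rintro ⟨s, hs, hσs⟩ hRσ
    obtain ⟨x, hxB, rfl⟩ := exists_erase_eq_of_subset_of_card_add_one (hS s hs).1 (hS s hs).2
    exact notMem_erase x B (hσs (hRσ (mem_filter.2 ⟨hxB, hs⟩)))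
  · intro hRσ
    obtain ⟨x, hxR, hxσ⟩ := not_subset.1 hRσ
    exact ⟨B.erase x, (mem_filter.1 hxR).2, subset_erase.2 ⟨hσB, hxσ⟩⟩

omit [DecidableEq V] in
theorem exists_lt_subset_iff {Y : Finset (Finset V)} {t : ℕ} {F : Fin t → Finset V}
    {rk : Finset V → α} (hfac : ∀ i, IsFacet Y (F i)) (hsurj : ∀ G, IsFacet Y G → ∃ i, F i = G)
    (hmono : StrictMono (rk ∘ F)) (k : Fin t) (σ : Finset V) :
    (∃ i, i < k ∧ σ ⊆ F i) ↔ ∃ G, IsFacet Y G ∧ rk G < rk (F k) ∧ σ ⊆ G := by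
  constructor
  · rintro ⟨i, hik, hσi⟩
    exact ⟨F i, hfac i, hmono hik, hσi⟩
  · rintro ⟨G, hG, hlt, hσG⟩
    obtain ⟨i, rfl⟩ := hsurj G hG
    exact ⟨i, hmono.lt_iff_lt.1 hlt, hσG⟩

theorem IsShelling.exists_isShellingOrder {Y : Finset (Finset V)} {t : ℕ} {F : Fin t → Finset V}
    (h : IsShelling Y F) : ∃ rk : Finset V → ℕ, IsShellingOrder Y rk := by
  obtain ⟨hinj, hfac, hsurj, hstep⟩ := h
  let rk : Finset V → ℕ := fun A => if hA : ∃ i, F i = A then (hA.choose : ℕ) else 0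
  have hrk : ∀ i, rk (F i) = i := fun i => by
    have hA : ∃ j, F j = F i := ⟨i, rfl⟩
    simp only [rk, dif_pos hA]
    exact congrArg Fin.val (hinj hA.choose_spec)
  have hmono : StrictMono (rk ∘ F) := fun i j hij => by simpa [hrk] using hij
  refine ⟨rk, ?_, ?_⟩
  · rintro _ hG _ hG' hrkG
    obtain ⟨i, rfl⟩ := hsurj _ hG
    obtain ⟨j, rfl⟩ := hsurj _ hG'
    rw [hinj.eq_iff]
    exact Fin.ext (by simpa [hrk] using hrkG)
  · rintro _ hG
    obtain ⟨k, rfl⟩ := hsurj _ hG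
    rcases Nat.eq_zero_or_pos k with hk | hk
    · have hfirst : ∀ G, ¬rk G < rk (F k) := by simp [hrk, hk]
      refine ⟨∅, empty_subset _, fun ⟨G, _, hlt⟩ => absurd hlt (hfirst G), fun σ _ _ => ?_⟩
      simp only [empty_subset, not_true_eq_false, iff_false]
      exact fun ⟨G, _, hlt, _⟩ => hfirst G hlt
    obtain ⟨S, hSne, hS, hSiff⟩ := hstep k hk
    refine ⟨(F k).filter fun x => (F k).erase x ∈ S, filter_subset _ _, fun _ => ?_,
      fun σ hσ hσF => ?_⟩
    · obtain ⟨s, hs⟩ := hSne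
      obtain ⟨x, hx, rfl⟩ := exists_erase_eq_of_subset_of_card_add_one (hS s hs).1 (hS s hs).2
      exact ⟨x, mem_filter.2 ⟨hx, hs⟩⟩
    · rw [← exists_lt_subset_iff hfac hsurj hmono, ← exists_mem_subset_iff_not_subset_filter hS hσF,
        ← hSiff σ hσ, and_iff_right hσF]

theorem IsShellingOrder.shellable {Y : Finset (Finset V)} {rk : Finset V → α}
    (h : IsShellingOrder Y rk) : Shellable Y := by
  set facets := Y.filter (IsFacet Y)
  have hcard : (facets.image rk).card = facets.card :=
    card_image_of_injOn (h.1.mono fun _ hG => (mem_filter.1 hG).2)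
  let o := (facets.image rk).orderIsoOfFin hcard
  choose F hFmem hrkF using fun i => mem_image.1 (o i).2
  have hfac : ∀ i, IsFacet Y (F i) := fun i => (mem_filter.1 (hFmem i)).2
  have hmono : StrictMono (rk ∘ F) := fun i j hij => by
    simpa only [Function.comp, hrkF] using Subtype.coe_lt_coe.2 (o.strictMono hij)
  have hsurj : ∀ G, IsFacet Y G → ∃ i, F i = G := fun G hG => by
    have hGmem : rk G ∈ facets.image rk := mem_image_of_mem rk (mem_filter.2 ⟨hG.1, hG⟩)
    refine ⟨o.symm ⟨rk G, hGmem⟩, h.1 (hfac _) hG ?_⟩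
    rw [hrkF, o.apply_symm_apply]
  refine ⟨facets.card, F, hmono.injective.of_comp, hfac, hsurj, fun k hk => ?_⟩
  obtain ⟨R, hRF, hRne, hRiff⟩ := h.2 (F k) (hfac k)
  have hR : R.Nonempty := hRne ⟨F ⟨0, by omega⟩, hfac _, hmono (Fin.mk_lt_of_lt_val hk)⟩
  refine ⟨R.image (F k).erase, hR.image _, ?_, fun σ hσ => ?_⟩
  · rintro _ hs
    obtain ⟨x, hx, rfl⟩ := mem_image.1 hs
    exact ⟨erase_subset _ _, card_erase_add_one (hRF hx)⟩
  · rw [exists_lt_subset_iff hfac hsurj hmono]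
    constructor
    · rintro ⟨hσF, hearlier⟩
      obtain ⟨x, hxR, hxσ⟩ := not_subset.1 ((hRiff σ hσ hσF).1 hearlier)
      exact ⟨_, mem_image_of_mem _ hxR, subset_erase.2 ⟨hσF, hxσ⟩⟩
    · rintro ⟨_, hs, hσs⟩
      obtain ⟨x, hxR, rfl⟩ := mem_image.1 hs
      obtain ⟨hσF, hxσ⟩ := subset_erase.1 hσs
      exact ⟨hσF, (hRiff σ hσ hσF).2 fun hRσ => hxσ (hRσ hxR)⟩

omit [DecidableEq V] in
theorem exists_isFacet_superset {Y : Finset (Finset V)} {B : Finset V} (hB : B ∈ Y) :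
    ∃ G, IsFacet Y G ∧ B ⊆ G := by
  obtain ⟨G, hBG, hmax⟩ := Y.exists_le_maximal hB
  exact ⟨G, ⟨hmax.1, fun τ hτ hGτ => le_antisymm hGτ (hmax.2 hτ hGτ)⟩, hBG⟩

theorem IsRestrictionFace.exists_earlier_facet_card_le {Y : Finset (Finset V)}
    {rk : Finset V → α} {F R σ : Finset V} (hF : IsFacet Y F) (hR : IsRestrictionFace Y rk F R)
    (hσ : σ.Nonempty) (hσF : σ ⊆ F) (hRσ : ¬R ⊆ σ) :
    ∃ G, IsFacet Y G ∧ rk G < rk F ∧ F.card ≤ G.card ∧ σ ⊆ G := by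
  obtain ⟨hRF, -, hRiff⟩ := hR
  obtain ⟨x, hxR, hxσ⟩ := not_subset.1 hRσ
  have hσFx : σ ⊆ F.erase x := subset_erase.2 ⟨hσF, hxσ⟩
  obtain ⟨G, hG, hlt, hFxG⟩ :=
    (hRiff _ (hσ.mono hσFx) (erase_subset _ _)).2 fun hRFx => notMem_erase x F (hRFx hxR)
  refine ⟨G, hG, hlt, ?_, hσFx.trans hFxG⟩
  by_contra! hsmall
  have hFxG_eq : F.erase x = G :=
    eq_of_subset_of_card_le hFxG (by rw [card_erase_of_mem (hRF hxR)]; omega)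
  have hGF : G = F := hG.2 F hF.1 (hFxG_eq ▸ erase_subset x F)
  exact hsmall.ne (congrArg card hGF)

noncomputable def subcomplexOfFacetsDimGE (r : ℕ) (X : Finset (Finset V)) : Finset (Finset V) :=
  X.filter fun σ => ∃ f ∈ X, IsFacet X f ∧ r + 1 ≤ f.card ∧ σ ⊆ f

section SubcomplexOfFacetsDimGE

variable {r : ℕ} {X : Finset (Finset V)}

theorem isFacet_subcomplexOfFacetsDimGE_iff {A : Finset V} :
    IsFacet (subcomplexOfFacetsDimGE r X) A ↔ IsFacet X A ∧ r + 1 ≤ A.card := by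
  constructor
  · rintro ⟨hA, hmax⟩
    obtain ⟨-, f, hfX, hf, hfr, hAf⟩ := mem_filter.1 hA
    obtain rfl : A = f := hmax f (mem_filter.2 ⟨hfX, f, hfX, hf, hfr, subset_rfl⟩) hAf
    exact ⟨hf, hfr⟩
  · rintro ⟨hA, hAr⟩
    exact ⟨mem_filter.2 ⟨hA.1, A, hA.1, hA, hAr, subset_rfl⟩,
      fun τ hτ hAτ => hA.2 τ (mem_filter.1 hτ).1 hAτ⟩

theorem IsComplex.subcomplexOfFacetsDimGE (hX : IsComplex X) :
    IsComplex (subcomplexOfFacetsDimGE r X) := by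
  refine ⟨fun σ hσ => hX.1 σ (filter_subset _ _ hσ), fun σ hσ τ hτ hτσ => ?_⟩
  obtain ⟨hσX, f, hfX, hf, hfr, hσf⟩ := mem_filter.1 hσ
  exact mem_filter.2 ⟨hX.2 σ hσX τ hτ hτσ, f, hfX, hf, hfr, hτσ.trans hσf⟩

theorem IsShellingOrder.subcomplexOfFacetsDimGE {rk : Finset V → α} (h : IsShellingOrder X rk) :
    IsShellingOrder (subcomplexOfFacetsDimGE r X) rk := by
  refine ⟨h.1.mono fun _ hA => (isFacet_subcomplexOfFacetsDimGE_iff.1 hA).1, fun F hF' => ?_⟩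
  obtain ⟨hF, hFr⟩ := isFacet_subcomplexOfFacetsDimGE_iff.1 hF'
  obtain ⟨R, hR⟩ := h.2 F hF
  refine ⟨R, hR.1,
    fun ⟨G, hG, hlt⟩ => hR.2.1 ⟨G, (isFacet_subcomplexOfFacetsDimGE_iff.1 hG).1, hlt⟩,
    fun σ hσ hσF => ?_⟩
  simp only [isFacet_subcomplexOfFacetsDimGE_iff]
  constructor
  · rintro ⟨G, ⟨hG, -⟩, hlt, hσG⟩
    exact (hR.2.2 σ hσ hσF).1 ⟨G, hG, hlt, hσG⟩
  · intro hRσ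
    obtain ⟨G, hG, hlt, hFG, hσG⟩ := hR.exists_earlier_facet_card_le hF hσ hσF hRσ
    exact ⟨G, ⟨hG, hFr.trans hFG⟩, hlt, hσG⟩

end SubcomplexOfFacetsDimGE

noncomputable def skeleton (s : ℕ) (X : Finset (Finset V)) : Finset (Finset V) :=
  X.filter fun σ => σ.card ≤ s + 1

noncomputable def firstRank (Y : Finset (Finset V)) (rk : Finset V → α) (B : Finset V) :
    WithTop α :=
  ((Y.filter fun G => IsFacet Y G ∧ B ⊆ G).image rk).min

section Skeleton

variable {Y : Finset (Finset V)} {s : ℕ} {rk : Finset V → α}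

theorem isFacet_skeleton_iff (hY : IsComplex Y) {B : Finset V} :
    IsFacet (skeleton s Y) B ↔ B ∈ Y ∧ B.card ≤ s + 1 ∧ (B.card = s + 1 ∨ IsFacet Y B) := by
  constructor
  · rintro ⟨hB, hmax⟩
    obtain ⟨hBY, hBs⟩ := mem_filter.1 hB
    refine ⟨hBY, hBs, or_iff_not_imp_left.2 fun hBs' => ⟨hBY, fun τ hτ hBτ => ?_⟩⟩
    by_contra hne
    obtain ⟨x, hxτ, hxB⟩ := exists_of_ssubset (ssubset_of_subset_of_ne hBτ hne)
    have hxBY : insert x B ∈ Y :=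
      hY.2 τ hτ _ (insert_nonempty x B) (insert_subset hxτ hBτ)
    have hxBs : (insert x B).card ≤ s + 1 := by rw [card_insert_of_notMem hxB]; omega
    exact hxB (hmax _ (mem_filter.2 ⟨hxBY, hxBs⟩) (subset_insert x B) ▸ mem_insert_self x B)
  · rintro ⟨hBY, hBs, hBs' | hB⟩
    · exact ⟨mem_filter.2 ⟨hBY, hBs⟩, fun τ hτ hBτ =>
        eq_of_subset_of_card_le hBτ (hBs' ▸ (mem_filter.1 hτ).2)⟩
    · exact ⟨mem_filter.2 ⟨hBY, hBs⟩, fun τ hτ hBτ => hB.2 τ (mem_filter.1 hτ).1 hBτ⟩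

theorem exists_isFacet_skeleton_between (hY : IsComplex Y) {G σ : Finset V} (hG : IsFacet Y G)
    (hσG : σ ⊆ G) (hσ : σ.card ≤ s + 1) : ∃ A, IsFacet (skeleton s Y) A ∧ σ ⊆ A ∧ A ⊆ G := by
  by_cases hGs : G.card ≤ s + 1
  · exact ⟨G, (isFacet_skeleton_iff hY).2 ⟨hG.1, hGs, Or.inr hG⟩, hσG, subset_rfl⟩
  obtain ⟨A, hσA, hAG, hA⟩ := exists_subsuperset_card_eq hσG hσ (by omega)
  have hAY : A ∈ Y := hY.2 G hG.1 A (card_pos.1 (by omega)) hAG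
  exact ⟨A, (isFacet_skeleton_iff hY).2 ⟨hAY, hA.le, Or.inl hA⟩, hσA, hAG⟩

theorem firstRank_le {B G : Finset V} (hG : IsFacet Y G) (hBG : B ⊆ G) :
    firstRank Y rk B ≤ rk G :=
  min_le (mem_image_of_mem rk (mem_filter.2 ⟨hG.1, hG, hBG⟩))

theorem exists_firstRank_eq {B : Finset V} (hB : B ∈ Y) :
    ∃ G, IsFacet Y G ∧ B ⊆ G ∧ firstRank Y rk B = rk G := by
  obtain ⟨G₀, hG₀, hBG₀⟩ := exists_isFacet_superset hB
  obtain ⟨G, hG, hmin⟩ := (Y.filter fun G => IsFacet Y G ∧ B ⊆ G).exists_min_image rk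
    ⟨G₀, mem_filter.2 ⟨hG₀.1, hG₀, hBG₀⟩⟩
  obtain ⟨-, hG, hBG⟩ := mem_filter.1 hG
  refine ⟨G, hG, hBG, le_antisymm (firstRank_le hG hBG) (Finset.le_min fun a ha => ?_)⟩
  obtain ⟨G', hG', rfl⟩ := mem_image.1 ha
  exact WithTop.coe_le_coe.2 (hmin G' hG')

theorem IsRestrictionFace.firstRank_eq_iff {F R B : Finset V} (hF : IsFacet Y F)
    (hR : IsRestrictionFace Y rk F R) (hB : B.Nonempty) (hBF : B ⊆ F) :
    firstRank Y rk B = rk F ↔ R ⊆ B := by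
  constructor
  · intro hfirst
    by_contra hRB
    obtain ⟨G, hG, hlt, hBG⟩ := (hR.2.2 B hB hBF).2 hRB
    exact (firstRank_le hG hBG).not_gt (hfirst ▸ WithTop.coe_lt_coe.2 hlt)
  · intro hRB
    refine le_antisymm (firstRank_le hF hBF) (Finset.le_min fun a ha => ?_)
    obtain ⟨G, hG, rfl⟩ := mem_image.1 ha
    obtain ⟨-, hG, hBG⟩ := mem_filter.1 hG
    exact WithTop.coe_le_coe.2 (not_lt.1 fun hlt => (hR.2.2 B hB hBF).1 ⟨G, hG, hlt, hBG⟩ hRB)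

end Skeleton

section SkeletonOrder

variable [LinearOrder V] {Y : Finset (Finset V)} {s : ℕ} {rk : Finset V → α}

noncomputable def skeletonRank (Y : Finset (Finset V)) (rk : Finset V → α) (B : Finset V) :
    Lex (WithTop α × Colex (Finset V)) :=
  toLex (firstRank Y rk B, toColex B)

theorem earlier_skeleton_facet_cases (hinj : Set.InjOn rk {F | IsFacet Y F})
    {A B F : Finset V} (hA : IsFacet (skeleton s Y) A) (hB : IsFacet (skeleton s Y) B)
    (hF : IsFacet Y F) (hFB : firstRank Y rk B = rk F)
    (hAB : skeletonRank Y rk A < skeletonRank Y rk B) :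
    (∃ G, IsFacet Y G ∧ rk G < rk F ∧ A ⊆ G) ∨ ∃ x ∈ B, x ∉ A ∧ ∃ y ∈ F \ B, y < x := by
  obtain ⟨G, hG, hAG, hGA⟩ := exists_firstRank_eq (rk := rk) (mem_filter.1 hA.1).1
  rcases Prod.Lex.toLex_lt_toLex.1 hAB with hlt | ⟨heq, hcolex⟩
  · rw [hGA, hFB] at hlt
    exact Or.inl ⟨G, hG, WithTop.coe_lt_coe.1 hlt, hAG⟩
  · have hGF : G = F := hinj hG hF (WithTop.coe_injective (hGA.symm.trans (heq.trans hFB)))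
    obtain ⟨x, hxB, hxA, hmax⟩ := Colex.toColex_lt_toColex_iff_exists_forall_lt.1 hcolex
    have hAB : ¬A ⊆ B := fun hAB => hcolex.ne (congrArg toColex (hA.2 B hB.1 hAB))
    obtain ⟨y, hyA, hyB⟩ := not_subset.1 hAB
    exact Or.inr ⟨x, hxB, hxA, y, mem_sdiff.2 ⟨hGF ▸ hAG hyA, hyB⟩, hmax y hyA hyB⟩

theorem exists_earlier_skeleton_facet_of_lt (hY : IsComplex Y) {B F G σ : Finset V}
    (hG : IsFacet Y G) (hlt : rk G < rk F) (hFB : firstRank Y rk B = rk F) (hσG : σ ⊆ G)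
    (hσ : σ.card ≤ s + 1) :
    ∃ A, IsFacet (skeleton s Y) A ∧ skeletonRank Y rk A < skeletonRank Y rk B ∧ σ ⊆ A := by
  obtain ⟨A, hA, hσA, hAG⟩ := exists_isFacet_skeleton_between hY hG hσG hσ
  refine ⟨A, hA, Prod.Lex.toLex_lt_toLex.2 (Or.inl ?_), hσA⟩
  exact (firstRank_le hG hAG).trans_lt (hFB ▸ WithTop.coe_lt_coe.2 hlt)

theorem exists_earlier_skeleton_facet_of_exchange (hY : IsComplex Y) {F R B : Finset V}
    (hF : IsFacet Y F) (hR : IsRestrictionFace Y rk F R) (hB : IsFacet (skeleton s Y) B)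
    (hBF : B ⊆ F) (hRB : R ⊆ B) {x y : V} (hxB : x ∈ B) (hxR : x ∉ R) (hy : y ∈ F \ B)
    (hyx : y < x) :
    ∃ A, IsFacet (skeleton s Y) A ∧ skeletonRank Y rk A < skeletonRank Y rk B ∧
      B.erase x ⊆ A := by
  obtain ⟨hyF, hyB⟩ := mem_sdiff.1 hy
  obtain ⟨hBY, -, hBs | hBfacet⟩ := (isFacet_skeleton_iff hY).1 hB
  swap
  · exact absurd (hBfacet.2 F hF.1 hBF ▸ hyF) hyB
  set A := insert y (B.erase x)
  have hyBx : y ∉ B.erase x := fun h => hyB (mem_of_mem_erase h)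
  have hAs : A.card = s + 1 := by
    rw [card_insert_of_notMem hyBx, card_erase_add_one hxB, hBs]
  have hAF : A ⊆ F := insert_subset hyF ((erase_subset x B).trans hBF)
  have hRA : R ⊆ A := fun z hz =>
    mem_insert_of_mem (mem_erase.2 ⟨fun hzx => hxR (hzx ▸ hz), hRB hz⟩)
  have hA : IsFacet (skeleton s Y) A :=
    (isFacet_skeleton_iff hY).2 ⟨hY.2 F hF.1 A (insert_nonempty y _) hAF, hAs.le, Or.inl hAs⟩
  have hxA : x ∉ A := by simp [A, hyx.ne']
  have hcolex : toColex A < toColex B := by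
    refine Colex.toColex_lt_toColex_iff_exists_forall_lt.2 ⟨x, hxB, hxA, fun b hbA hbB => ?_⟩
    rcases mem_insert.1 hbA with rfl | hb
    · exact hyx
    · exact absurd (mem_of_mem_erase hb) hbB
  have hfirst : firstRank Y rk A = firstRank Y rk B := by
    rw [(hR.firstRank_eq_iff hF (insert_nonempty y _) hAF).2 hRA,
      (hR.firstRank_eq_iff hF (hY.1 B hBY) hBF).2 hRB]
  exact ⟨A, hA, Prod.Lex.toLex_lt_toLex.2 (Or.inr ⟨hfirst, hcolex⟩), subset_insert _ _⟩

theorem IsShellingOrder.skeleton (hY : IsComplex Y) (h : IsShellingOrder Y rk) (s : ℕ) :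
    IsShellingOrder (skeleton s Y) (skeletonRank Y rk) := by
  refine ⟨fun A _ B _ hAB => toColex.injective (congrArg (fun p => (ofLex p).2) hAB),
    fun B hB => ?_⟩
  obtain ⟨hBY, hBs⟩ := mem_filter.1 hB.1
  obtain ⟨F, hF, hBF, hFB⟩ := exists_firstRank_eq (rk := rk) hBY
  obtain ⟨R, hR⟩ := h.2 F hF
  have hRB : R ⊆ B := (hR.firstRank_eq_iff hF (hY.1 B hBY) hBF).1 hFB
  refine ⟨R ∪ B.filter fun x => ∃ y ∈ F \ B, y < x, union_subset hRB (filter_subset _ _), ?_,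
    fun σ hσ hσB => ⟨?_, ?_⟩⟩
  · rintro ⟨A, hA, hAB⟩
    rcases earlier_skeleton_facet_cases h.1 hA hB hF hFB hAB with
      ⟨G, hG, hlt, -⟩ | ⟨x, hxB, -, hx⟩
    · exact (hR.2.1 ⟨G, hG, hlt⟩).mono subset_union_left
    · exact ⟨x, mem_union_right _ (mem_filter.2 ⟨hxB, hx⟩)⟩
  · rintro ⟨A, hA, hAB, hσA⟩ hR'σ
    rcases earlier_skeleton_facet_cases h.1 hA hB hF hFB hAB with
      ⟨G, hG, hlt, hAG⟩ | ⟨x, hxB, hxA, hx⟩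
    · exact (hR.2.2 σ hσ (hσB.trans hBF)).1 ⟨G, hG, hlt, hσA.trans hAG⟩
        (subset_union_left.trans hR'σ)
    · exact hxA (hσA (hR'σ (mem_union_right _ (mem_filter.2 ⟨hxB, hx⟩))))
  · intro hR'σ
    obtain ⟨x, hxR', hxσ⟩ := not_subset.1 hR'σ
    by_cases hxR : x ∈ R
    · obtain ⟨G, hG, hlt, hσG⟩ := (hR.2.2 σ hσ (hσB.trans hBF)).2 fun hRσ => hxσ (hRσ hxR)
      exact exists_earlier_skeleton_facet_of_lt hY hG hlt hFB hσG ((card_le_card hσB).trans hBs)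
    · obtain ⟨hxB, y, hy, hyx⟩ := mem_filter.1 ((mem_union.1 hxR').resolve_left hxR)
      obtain ⟨A, hA, hAB, hBxA⟩ :=
        exists_earlier_skeleton_facet_of_exchange hY hF hR hB hBF hRB hxB hxR hy hyx
      exact ⟨A, hA, hAB, (subset_erase.2 ⟨hσB, hxσ⟩).trans hBxA⟩

end SkeletonOrder

theorem shellable_interval_general (X : Finset (Finset V)) (hX : IsComplex X)
    (hshell : Shellable X) (r s : ℕ) :
    Shellable (X.filter fun σ =>
      σ.card ≤ s + 1 ∧ ∃ f ∈ X, IsFacet X f ∧ r + 1 ≤ f.card ∧ σ ⊆ f) := by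
  let _ : LinearOrder V := IsWellOrder.linearOrder WellOrderingRel
  obtain ⟨t, F, hF⟩ := hshell
  obtain ⟨rk, hrk⟩ := hF.exists_isShellingOrder
  have hshelling :=
    (hrk.subcomplexOfFacetsDimGE (r := r)).skeleton (hX.subcomplexOfFacetsDimGE (r := r)) s
  convert hshelling.shellable using 1
  ext σ
  simp only [skeleton, subcomplexOfFacetsDimGE, filter_filter, and_comm]

/-- if `X` is a shellable finite simplicial complex and `0 ≤ r ≤ s ≤ dim X`,
then `X^{(r,s)} = {σ ∈ X : dim σ ≤ s and σ ⊆ F for some facet F with dim F ≥ r}` is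
shellable.  (Dimensions are expressed via cardinalities: `dim σ = σ.card - 1`, and
`s ≤ dim X` reads `s + 1 ≤ X.sup card`.) -/
theorem shellable_interval (X : Finset (Finset V)) (hX : IsComplex X)
    (hshell : Shellable X) (r s : ℕ) (hrs : r ≤ s) (hs : s + 1 ≤ X.sup Finset.card) :
    Shellable (X.filter fun σ =>
      σ.card ≤ s + 1 ∧ ∃ f ∈ X, IsFacet X f ∧ r + 1 ≤ f.card ∧ σ ⊆ f) :=
  shellable_interval_general X hX hshell r s
end

section
/- In a shelling of a (not necessarily pure) finite simplicial complex, the first facet always has maximal dimension, i.e., dim F_1 = dim X. -/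
/-!
Every facet `F k` with `k > 0` shares a codimension-one face `s` with some earlier facet `F i`.
If `F i` were smaller than `F k`, then `s = F i` by cardinality, so `F i ⊆ F k`, contradicting
maximality of `F i`. Hence every facet is dominated in size by an earlier one, and by strong
induction by `F 0`.
-/

variable {V : Type*} [DecidableEq V]

lemma exists_facet_superset (X : Finset (Finset V)) {s : Finset V} (hs : s ∈ X) :
    ∃ m, IsFacet X m ∧ s ⊆ m := by
  obtain ⟨m, hm, hmax⟩ := (X.filter (s ⊆ ·)).exists_maximal ⟨s, by simp [hs]⟩
  rw [Finset.mem_filter] at hm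
  refine ⟨m, ⟨hm.1, fun u hu hmu => ?_⟩, hm.2⟩
  exact le_antisymm hmu (hmax (Finset.mem_filter.mpr ⟨hu, hm.2.trans hmu⟩) hmu)

namespace IsShelling

variable {α : Type*} {X : Finset (Finset α)} {t : ℕ} {F : Fin t → Finset α}

lemma eq_of_subset (hF : IsShelling X F) {i k : Fin t} (h : F i ⊆ F k) : i = k :=
  hF.1 ((hF.2.1 i).2 (F k) (hF.2.1 k).1 h)

lemma exists_lt_card_le (hF : IsShelling X F) (hne : ∀ s ∈ X, s.Nonempty)
    {k : Fin t} (hk : 0 < (k : ℕ)) : ∃ i < k, (F k).card ≤ (F i).card := by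
  -- a vertex has only the empty face as codimension-one face, which the shelling condition ignores
  by_cases hsmall : (F k).card ≤ 1
  · refine ⟨⟨0, by omega⟩, Fin.lt_def.mpr hk, hsmall.trans ?_⟩
    exact Finset.card_pos.mpr (hne _ (hF.2.1 _).1)
  obtain ⟨S, ⟨s, hsS⟩, hS, hSiff⟩ := hF.2.2.2 k hk
  obtain ⟨hsk, hscard⟩ := hS s hsS
  have hs : s.Nonempty := Finset.card_pos.mp (by omega)
  obtain ⟨-, i, hik, hsi⟩ := (hSiff s hs).2 ⟨s, hsS, subset_rfl⟩
  refine ⟨i, hik, not_lt.mp fun hlt => hik.ne (hF.eq_of_subset ?_)⟩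
  rwa [← Finset.eq_of_subset_of_card_le hsi (by omega)]

lemma card_le_card_zero (hF : IsShelling X F) (hne : ∀ s ∈ X, s.Nonempty) (ht : 0 < t)
    (k : Fin t) : (F k).card ≤ (F ⟨0, ht⟩).card := by
  induction k using WellFoundedLT.induction with
  | _ k ih =>
    rcases Nat.eq_zero_or_pos (k : ℕ) with hk | hk
    · rw [show k = ⟨0, ht⟩ from Fin.ext hk]
    · obtain ⟨i, hik, hcard⟩ := hF.exists_lt_card_le hne hk
      exact hcard.trans (ih i hik)

end IsShelling

/-- in any shelling of a (not necessarily pure) finite simplicial complex,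
the first facet has maximal dimension: `dim F_1 = dim X`, i.e.
`(F 0).card = X.sup card`. -/
theorem shelling_first_facet_max_dim (X : Finset (Finset V)) (hX : IsComplex X)
    {t : ℕ} (F : Fin t → Finset V) (hF : IsShelling X F) (ht : 0 < t) :
    (F ⟨0, ht⟩).card = X.sup Finset.card := by
  refine le_antisymm (Finset.le_sup (hF.2.1 _).1) (Finset.sup_le fun s hs => ?_)
  obtain ⟨m, hm, hsm⟩ := exists_facet_superset X hs
  obtain ⟨i, rfl⟩ := hF.2.2.1 m hm
  exact (Finset.card_le_card hsm).trans (hF.card_le_card_zero hX.1 ht i)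
end
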